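/- For β ∈ (0,1] and α ∈ (0,2), the coefficients c_n associated to the kernel k(t,s) = (α/(βΓ(β))) s^{α/β−1}(t^{α/β}−s^{α/β})^{β−1} via c_0 ≡ 1, c_n(t)=∫_0^t k(t,s)c_{n−1}(s)ds satisfy c_n(t) = t^{αn}/Γ(βn+1), so that Φ(t,λ) = Σ_n c_n(t)λ^n = E_β(λ t^α), where E_β is the Mittag-Leffler function E_β(z) = Σ_{n≥0} z^n/Γ(βn+1). -/

import Mathlib

open MeasureTheory Set

lemma subIoo {a t : ℝ} (ha : 0 < a) (ht : 0 < t) (g : ℝ → ℝ) :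
    ∫ s in Ioo 0 t, a * s ^ (a-1) * g (s ^ a) = ∫ u in Ioo 0 (t ^ a), g u := by
  have key := MeasureTheory.integral_comp_rpow_Ioi ((Ioo (0:ℝ) (t ^ a)).indicator g) ha.ne'
  have hR : ∫ y in Ioi (0:ℝ), (Ioo (0:ℝ) (t ^ a)).indicator g y
      = ∫ u in Ioo 0 (t ^ a), g u := by
    rw [integral_indicator measurableSet_Ioo, Measure.restrict_restrict measurableSet_Ioo,
      inter_eq_left.mpr Ioo_subset_Ioi_self]
  have hdiff : ∀ x ∈ Ioi (0:ℝ) \ Ioo 0 t,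
      (|a| * x ^ (a-1)) • (Ioo (0:ℝ) (t ^ a)).indicator g (x ^ a) = 0 := by
    intro x hx
    obtain ⟨hx0, hxt⟩ := hx
    have hxt' : t ≤ x := by
      by_contra h
      exact hxt ⟨hx0, lt_of_not_ge h⟩
    rw [indicator_of_notMem (fun hmem => absurd hmem.2
      (not_lt.2 (Real.rpow_le_rpow ht.le hxt' ha.le))), smul_zero]
  have hL : (∫ s in Ioi (0:ℝ), (|a| * s ^ (a-1)) • (Ioo (0:ℝ) (t ^ a)).indicator g (s ^ a))
      = ∫ s in Ioo 0 t, a * s ^ (a-1) * g (s ^ a) := by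
    rw [setIntegral_eq_of_subset_of_forall_diff_eq_zero measurableSet_Ioi
      Ioo_subset_Ioi_self hdiff]
    refine setIntegral_congr_fun measurableSet_Ioo fun s hs => ?_
    have hmem : s ^ a ∈ Ioo (0:ℝ) (t ^ a) :=
      ⟨Real.rpow_pos_of_pos hs.1 a, Real.rpow_lt_rpow hs.1.le hs.2 ha⟩
    rw [indicator_of_mem hmem, smul_eq_mul, abs_of_pos ha]
  rw [← hL, key, hR]

lemma scaleIoo {T p q : ℝ} (hT : 0 < T) :
    ∫ u in Ioo 0 T, u ^ p * (T - u) ^ q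
      = T ^ (p + q + 1) * ∫ x in Ioo (0:ℝ) 1, x ^ p * (1 - x) ^ q := by
  have h1 : ∫ u in Ioo 0 T, u ^ p * (T - u) ^ q
      = ∫ u in (0:ℝ)..T, u ^ p * (T - u) ^ q := by
    rw [intervalIntegral.integral_of_le hT.le, integral_Ioc_eq_integral_Ioo]
  have h2 : ∫ x in Ioo (0:ℝ) 1, x ^ p * (1 - x) ^ q
      = ∫ x in (0:ℝ)..1, x ^ p * (1 - x) ^ q := by
    rw [intervalIntegral.integral_of_le zero_le_one, integral_Ioc_eq_integral_Ioo]
  rw [h1, h2]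
  have key : (∫ x in (0:ℝ)..1, (fun u => u ^ p * (T - u) ^ q) (T * x))
      = T⁻¹ • ∫ u in (T * 0)..(T * 1), u ^ p * (T - u) ^ q := by
    exact intervalIntegral.integral_comp_mul_left (fun u => u ^ p * (T - u) ^ q) hT.ne'
  simp only [mul_zero, mul_one] at key
  have congr1 : (∫ x in (0:ℝ)..1, (fun u => u ^ p * (T - u) ^ q) (T * x))
      = ∫ x in (0:ℝ)..1, T ^ p * T ^ q * (x ^ p * (1 - x) ^ q) := by
    refine intervalIntegral.integral_congr fun x hx => ?_
    rw [uIcc_of_le zero_le_one] at hx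
    have h1x : (0:ℝ) ≤ 1 - x := by linarith [hx.2]
    simp only
    rw [Real.mul_rpow hT.le hx.1, show T - T * x = T * (1 - x) by ring,
      Real.mul_rpow hT.le h1x]
    ring
  rw [congr1, intervalIntegral.integral_const_mul] at key
  have : (∫ u in (0:ℝ)..T, u ^ p * (T - u) ^ q)
      = T * (T ^ p * T ^ q * ∫ x in (0:ℝ)..1, x ^ p * (1 - x) ^ q) := by
    rw [smul_eq_mul] at key
    rw [key]; field_simp
  rw [this, show p + q + 1 = 1 + (p + q) by ring, Real.rpow_add hT,
    Real.rpow_add hT, Real.rpow_one]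
  ring

lemma betaIoo {u v : ℝ} (hu : 0 < u) (hv : 0 < v) :
    ∫ x in Ioo (0:ℝ) 1, x ^ (u-1) * (1-x) ^ (v-1) =
      Real.Gamma u * Real.Gamma v / Real.Gamma (u+v) := by
  have h1 : ∫ x in Ioo (0:ℝ) 1, x ^ (u-1) * (1-x) ^ (v-1)
      = ∫ x in (0:ℝ)..1, x ^ (u-1) * (1-x) ^ (v-1) := by
    rw [intervalIntegral.integral_of_le zero_le_one, integral_Ioc_eq_integral_Ioo]
  have h2 : Complex.betaIntegral u v
      = ((∫ x in (0:ℝ)..1, x ^ (u-1) * (1-x) ^ (v-1) : ℝ) : ℂ) := by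
    rw [← intervalIntegral.integral_ofReal, Complex.betaIntegral]
    refine intervalIntegral.integral_congr fun x hx => ?_
    rw [uIcc_of_le zero_le_one] at hx
    rw [show ((u:ℂ)-1) = ((u-1:ℝ):ℂ) by push_cast; ring,
      show ((v:ℂ)-1) = ((v-1:ℝ):ℂ) by push_cast; ring,
      show (1-(x:ℂ)) = ((1-x:ℝ):ℂ) by push_cast; ring,
      ← Complex.ofReal_cpow hx.1, ← Complex.ofReal_cpow (by linarith [hx.2]),
      ← Complex.ofReal_mul]
  have h3 := Complex.Gamma_mul_Gamma_eq_betaIntegral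
    (by simpa using hu : 0 < (u:ℂ).re) (by simpa using hv : 0 < (v:ℂ).re)
  rw [h2, ← Complex.ofReal_add, Complex.Gamma_ofReal, Complex.Gamma_ofReal,
    Complex.Gamma_ofReal, ← Complex.ofReal_mul, ← Complex.ofReal_mul,
    Complex.ofReal_inj] at h3
  have hG : Real.Gamma (u+v) ≠ 0 := (Real.Gamma_pos_of_pos (by linarith)).ne'
  rw [h1]
  field_simp
  linarith [h3]

theorem stmt_8 (α β : ℝ) (hβ : β ∈ Ioc (0:ℝ) 1) (hα : α ∈ Ioo (0:ℝ) 2)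
    (k : ℝ → ℝ → ℝ)
    (hk : ∀ t s : ℝ, 0 < s → s < t →
      k t s = α / (β * Real.Gamma β) * s ^ (α / β - 1) * (t ^ (α / β) - s ^ (α / β)) ^ (β - 1))
    (c : ℕ → ℝ → ℝ) (hc0 : ∀ t, c 0 t = 1)
    (hcrec : ∀ n : ℕ, ∀ t > 0, c (n + 1) t = ∫ s in Ioo (0:ℝ) t, k t s * c n s) :
    (∀ n : ℕ, ∀ t > 0, c n t = t ^ (α * n) / Real.Gamma (β * n + 1)) ∧
      ∀ t > 0, ∀ l : ℂ,
        (∑' n : ℕ, (c n t : ℂ) * l ^ n)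
          = ∑' n : ℕ, (l * ((t ^ α : ℝ) : ℂ)) ^ n / ((Real.Gamma (β * n + 1) : ℝ) : ℂ) := by
  obtain ⟨hβ0, hβ1⟩ := hβ
  obtain ⟨hα0, hα2⟩ := hα
  set a : ℝ := α / β with ha_def
  have ha : 0 < a := div_pos hα0 hβ0
  have hGβ : 0 < Real.Gamma β := Real.Gamma_pos_of_pos hβ0
  have hab : a * β = α := div_mul_cancel₀ α hβ0.ne'
  have hfirst : ∀ n : ℕ, ∀ t > 0, c n t = t ^ (α * n) / Real.Gamma (β * n + 1) := by
    intro n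
    induction n with
    | zero => intro t ht; rw [hc0]; norm_num [Real.Gamma_one]
    | succ n ih =>
      intro t ht
      have hG : 0 < Real.Gamma (β * n + 1) := Real.Gamma_pos_of_pos (by positivity)
      rw [hcrec n t ht]
      have step1 : ∫ s in Ioo (0:ℝ) t, k t s * c n s
          = (1 / (Real.Gamma β * Real.Gamma (β * n + 1))) *
            ∫ s in Ioo (0:ℝ) t, a * s ^ (a - 1) *
              ((s ^ a) ^ (β * n) * (t ^ a - s ^ a) ^ (β - 1)) := by
        rw [← MeasureTheory.integral_const_mul]
        refine setIntegral_congr_fun measurableSet_Ioo fun s hs => ?_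
        rw [hk t s hs.1 hs.2, ih s hs.1]
        have e1 : (s ^ a) ^ (β * n) = s ^ (α * n) := by
          rw [← Real.rpow_mul hs.1.le]
          congr 1
          rw [← hab]; ring
        rw [e1, ← hab]
        field_simp
      have step2 : ∫ s in Ioo (0:ℝ) t, a * s ^ (a - 1) *
            ((s ^ a) ^ (β * n) * (t ^ a - s ^ a) ^ (β - 1))
          = ∫ u in Ioo (0:ℝ) (t ^ a), u ^ (β * n) * (t ^ a - u) ^ (β - 1) :=
        subIoo ha ht (fun u => u ^ (β * n) * (t ^ a - u) ^ (β - 1))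
      have hT : 0 < t ^ a := Real.rpow_pos_of_pos ht a
      have step3 := scaleIoo (T := t ^ a) (p := β * n) (q := β - 1) hT
      have hbeta := betaIoo (u := β * n + 1) (v := β) (by positivity) hβ0
      rw [show β * (n:ℝ) + 1 - 1 = β * n by ring] at hbeta
      rw [step1, step2, step3, hbeta]
      have expo : (t ^ a) ^ (β * n + (β - 1) + 1) = t ^ (α * (n + 1 : ℕ)) := by
        rw [← Real.rpow_mul ht.le]
        congr 1
        push_cast
        rw [← hab]; ring
      have garg : Real.Gamma (β * n + 1 + β) = Real.Gamma (β * (n + 1 : ℕ) + 1) := by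
        congr 1
        push_cast
        ring
      rw [expo, garg]
      have hG2 : 0 < Real.Gamma (β * (n + 1 : ℕ) + 1) := Real.Gamma_pos_of_pos (by positivity)
      field_simp
  refine ⟨hfirst, fun t ht l => tsum_congr fun n => ?_⟩
  rw [hfirst n t ht]
  have e : t ^ (α * n) = (t ^ α) ^ n := by
    rw [← Real.rpow_natCast (t ^ α) n, ← Real.rpow_mul ht.le]
  rw [e]
  push_cast
  rw [mul_pow]
  ring
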